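/- If G is a graph of order n with minimum hop degree δ_h ≥ 1, then γ_{2sr}(G) ≤ 2n·(ln(δ_h + 1) + 1)/(δ_h + 1). -/

import Mathlib

open Finset

noncomputable section
open scoped Classical

variable {n : ℕ}

/-- The set of vertices at distance exactly 2 from `i`. -/
def N2 (G : SimpleGraph (Fin n)) (i : Fin n) : Finset (Fin n) :=
  Finset.univ.filter (fun j => G.dist i j = 2)

/-- The neighborhood of `i`. -/
def Nbr (G : SimpleGraph (Fin n)) (i : Fin n) : Finset (Fin n) :=
  Finset.univ.filter (fun j => G.Adj i j)

/-- Hop degree of a vertex. -/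
def hopDeg (G : SimpleGraph (Fin n)) (i : Fin n) : ℕ := (N2 G i).card

/-- Minimum hop degree. -/
def minHopDeg (G : SimpleGraph (Fin n)) : ℕ := ⨅ i, hopDeg G i

/-- Minimum degree. -/
def minDeg (G : SimpleGraph (Fin n)) : ℕ := ⨅ i, (Nbr G i).card

def IsHopDomSet (G : SimpleGraph (Fin n)) (S : Finset (Fin n)) : Prop :=
  ∀ u, u ∉ S → ∃ v ∈ S, G.dist u v = 2

def IsTwoStepDomSet (G : SimpleGraph (Fin n)) (S : Finset (Fin n)) : Prop :=
  ∀ u : Fin n, ∃ v ∈ S, G.dist u v = 2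

def IsRestrainedHopDomSet (G : SimpleGraph (Fin n)) (S : Finset (Fin n)) : Prop :=
  IsHopDomSet G S ∧ ∀ u, u ∉ S → ∃ v, v ∉ S ∧ G.Adj u v

def IsTotalRestrainedHopDomSet (G : SimpleGraph (Fin n)) (S : Finset (Fin n)) : Prop :=
  IsTwoStepDomSet G S ∧ ∀ u, u ∉ S → ∃ v, v ∉ S ∧ G.Adj u v

def IsTwoStepRestrainedDomSet (G : SimpleGraph (Fin n)) (S : Finset (Fin n)) : Prop :=
  IsHopDomSet G S ∧ ∀ u, u ∉ S → ∃ v, v ∉ S ∧ G.dist u v = 2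

def IsTotalTwoStepRestrainedDomSet (G : SimpleGraph (Fin n)) (S : Finset (Fin n)) : Prop :=
  IsTwoStepDomSet G S ∧ ∀ u, u ∉ S → ∃ v, v ∉ S ∧ G.dist u v = 2

def hopDomNum (G : SimpleGraph (Fin n)) : ℕ :=
  sInf {k | ∃ S : Finset (Fin n), IsHopDomSet G S ∧ S.card = k}

def twoStepDomNum (G : SimpleGraph (Fin n)) : ℕ :=
  sInf {k | ∃ S : Finset (Fin n), IsTwoStepDomSet G S ∧ S.card = k}

def rhDomNum (G : SimpleGraph (Fin n)) : ℕ :=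
  sInf {k | ∃ S : Finset (Fin n), IsRestrainedHopDomSet G S ∧ S.card = k}

def trhDomNum (G : SimpleGraph (Fin n)) : ℕ :=
  sInf {k | ∃ S : Finset (Fin n), IsTotalRestrainedHopDomSet G S ∧ S.card = k}

def tsrDomNum (G : SimpleGraph (Fin n)) : ℕ :=
  sInf {k | ∃ S : Finset (Fin n), IsTwoStepRestrainedDomSet G S ∧ S.card = k}

def ttsrDomNum (G : SimpleGraph (Fin n)) : ℕ :=
  sInf {k | ∃ S : Finset (Fin n), IsTotalTwoStepRestrainedDomSet G S ∧ S.card = k}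

/-- The graph `Dist(G;2)` joining vertices at distance exactly 2 in `G`. -/
def dist2Graph (G : SimpleGraph (Fin n)) : SimpleGraph (Fin n) where
  Adj u v := u ≠ v ∧ G.dist u v = 2
  symm := by
    refine ⟨?_⟩
    intro u v h
    exact ⟨h.1.symm, by rw [SimpleGraph.dist_comm]; exact h.2⟩
  loopless := ⟨fun v h => h.1 rfl⟩

def domNum (H : SimpleGraph (Fin n)) : ℕ :=
  sInf {k | ∃ S : Finset (Fin n), (∀ u, u ∉ S → ∃ v ∈ S, H.Adj u v) ∧ S.card = k}

def totalDomNum (H : SimpleGraph (Fin n)) : ℕ :=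
  sInf {k | ∃ S : Finset (Fin n), (∀ u : Fin n, ∃ v ∈ S, H.Adj u v) ∧ S.card = k}

/-- Matching number: maximum number of edges in a matching. -/
def matchingNum (G : SimpleGraph (Fin n)) : ℕ :=
  sSup {k | ∃ M : SimpleGraph.Subgraph G, M.IsMatching ∧ M.edgeSet.ncard = k}

/-- A hop matching: a set of paths of length two, no two of which share an end vertex. -/
def IsHopMatching (G : SimpleGraph (Fin n)) (H : Finset (Fin n × Fin n × Fin n)) : Prop :=
  (∀ t ∈ H, G.Adj t.1 t.2.1 ∧ G.Adj t.2.1 t.2.2 ∧ t.1 ≠ t.2.2) ∧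
  ∀ t ∈ H, ∀ t' ∈ H, t ≠ t' →
    t.1 ≠ t'.1 ∧ t.1 ≠ t'.2.2 ∧ t.2.2 ≠ t'.1 ∧ t.2.2 ≠ t'.2.2

/-- Hop matching number. -/
def hopMatchingNum (G : SimpleGraph (Fin n)) : ℕ :=
  sSup {k | ∃ H : Finset (Fin n × Fin n × Fin n), IsHopMatching G H ∧ H.card = k}

def frh (G : SimpleGraph (Fin n)) (p : Fin n → ℝ) : ℝ :=
  (∑ i, p i) + (∑ i, (1 - p i) * ∏ j ∈ N2 G i, (1 - p j)) +
  ∑ i, (1 - p i) * (1 - (1 - p i) * ∏ j ∈ N2 G i, (1 - p j)) *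
    ∏ j ∈ Nbr G i, (p j + (1 - p j) * ∏ k ∈ N2 G j, (1 - p k))

def f2sr (G : SimpleGraph (Fin n)) (p : Fin n → ℝ) : ℝ :=
  (∑ i, p i) + (∑ i, (1 - p i) * ∏ j ∈ N2 G i, (1 - p j)) +
  ∑ i, (1 - p i) * (1 - (1 - p i) * ∏ j ∈ N2 G i, (1 - p j)) *
    ∏ j ∈ N2 G i, (p j + (1 - p j) * ∏ k ∈ N2 G j, (1 - p k))

def ZSet (G : SimpleGraph (Fin n)) (X : Finset (Fin n)) : Finset (Fin n) :=
  Finset.univ.filter (fun i => i ∉ X ∧ N2 G i ∩ X = ∅)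

def YSet (G : SimpleGraph (Fin n)) (X : Finset (Fin n)) : Finset (Fin n) :=
  Finset.univ.filter (fun i => i ∉ X ∪ ZSet G X ∧ Nbr G i ⊆ X ∪ ZSet G X)

def DSet (G : SimpleGraph (Fin n)) (X : Finset (Fin n)) : Finset (Fin n) :=
  X ∪ ZSet G X ∪ YSet G X

/-! Put each vertex into a random set `X` independently with probability `p`. Let `Z` be the
vertices outside `X` with no hop neighbour in `X`, and `Y` the vertices outside `X ∪ Z` all of
whose hop neighbours lie in `X ∪ Z`; then `X ∪ Z ∪ Y` is a 2-step restrained dominating set.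
A vertex `i` can only lie in it if `i` or one fixed hop neighbour of `i` lies in `X ∪ Z`, which
happens with probability at most `2 (p + (1 - p) ^ (δ_h + 1))`. Hence some `X` yields a set of
at most `2 n (p + (1 - p) ^ (δ_h + 1))` vertices, and `p = ln (δ_h + 1) / (δ_h + 1)` gives the
bound because `(1 - p) ^ (δ_h + 1) ≤ exp (-p (δ_h + 1))`. -/

section BernoulliWeight

variable {α : Type*} [Fintype α]

/-- The probability of the outcome `X` when every element of `α` is put into the random set
independently with probability `p`. -/
def bernoulliWeight (p : ℝ) (X : Finset α) : ℝ :=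
  p ^ #X * (1 - p) ^ (Fintype.card α - #X)

def eventProb (p : ℝ) (E : Finset α → Prop) : ℝ :=
  ∑ X with E X, bernoulliWeight p X

lemma bernoulliWeight_nonneg {p : ℝ} (hp₀ : 0 ≤ p) (hp₁ : p ≤ 1) (X : Finset α) :
    0 ≤ bernoulliWeight p X :=
  mul_nonneg (pow_nonneg hp₀ _) (pow_nonneg (sub_nonneg.2 hp₁) _)

lemma bernoulliWeight_pos {p : ℝ} (hp₀ : 0 < p) (hp₁ : p < 1) (X : Finset α) :
    0 < bernoulliWeight p X :=
  mul_pos (pow_pos hp₀ _) (pow_pos (sub_pos.2 hp₁) _)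

lemma sum_bernoulliWeight (p : ℝ) : ∑ X : Finset α, bernoulliWeight p X = 1 := by
  simp [bernoulliWeight, Fintype.sum_pow_mul_eq_add_pow]

lemma eventProb_disjoint (p : ℝ) (T : Finset α) :
    eventProb p (Disjoint · T) = (1 - p) ^ #T := by
  have hweight : ∀ X ∈ Tᶜ.powerset,
      bernoulliWeight p X = (1 - p) ^ #T * (p ^ #X * (1 - p) ^ (#Tᶜ - #X)) := by
    intro X hX
    have hcard : Fintype.card α - #X = #T + (#Tᶜ - #X) := by
      have := card_le_card (mem_powerset.1 hX)
      rw [card_compl] at this ⊢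
      have := card_le_univ T
      omega
    rw [bernoulliWeight, hcard, pow_add]
    ring
  calc eventProb p (Disjoint · T) = ∑ X ∈ Tᶜ.powerset, bernoulliWeight p X := by
        unfold eventProb
        congr 1
        ext X
        simp [subset_compl_iff_disjoint_right]
    _ = (1 - p) ^ #T := by
        rw [sum_congr rfl hweight, ← mul_sum, sum_pow_mul_eq_add_pow]
        simp

lemma eventProb_not (p : ℝ) (E : Finset α → Prop) :
    eventProb p (¬ E ·) = 1 - eventProb p E := by
  simp only [eventProb, sum_filter]
  rw [eq_sub_iff_add_eq, ← sum_add_distrib, ← sum_bernoulliWeight (α := α) p]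
  refine sum_congr rfl fun X _ ↦ ?_
  split_ifs <;> simp_all

lemma eventProb_mem (p : ℝ) (a : α) : eventProb p (a ∈ ·) = p := by
  have h := eventProb_not p (a ∈ ·)
  simp only [← disjoint_singleton_right, eventProb_disjoint, card_singleton, pow_one] at h
  linarith

lemma eventProb_mono {p : ℝ} (hp₀ : 0 ≤ p) (hp₁ : p ≤ 1) {E F : Finset α → Prop}
    (h : ∀ X, E X → F X) : eventProb p E ≤ eventProb p F :=
  sum_le_sum_of_subset_of_nonneg (monotone_filter_right _ fun X _ ↦ h X)
    fun X _ _ ↦ bernoulliWeight_nonneg hp₀ hp₁ X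

lemma eventProb_or_le {p : ℝ} (hp₀ : 0 ≤ p) (hp₁ : p ≤ 1) (E F : Finset α → Prop) :
    eventProb p (fun X ↦ E X ∨ F X) ≤ eventProb p E + eventProb p F := by
  simp only [eventProb, sum_filter, ← sum_add_distrib]
  refine sum_le_sum fun X _ ↦ ?_
  have := bernoulliWeight_nonneg hp₀ hp₁ X
  split_ifs <;> simp_all

lemma sum_bernoulliWeight_mul_card {β : Type*} [Fintype β] (p : ℝ) (f : Finset α → Finset β) :
    ∑ X, bernoulliWeight p X * #(f X) = ∑ b, eventProb p (b ∈ f ·) := by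
  simp only [eventProb, sum_filter]
  rw [sum_comm]
  refine sum_congr rfl fun X _ ↦ ?_
  rw [← sum_filter, sum_const]
  simp [mul_comm]

lemma exists_card_le_of_eventProb_le {β : Type*} [Fintype β] {p c : ℝ} (hp₀ : 0 < p)
    (hp₁ : p < 1) (f : Finset α → Finset β) (h : ∀ b, eventProb p (b ∈ f ·) ≤ c) :
    ∃ X, (#(f X) : ℝ) ≤ Fintype.card β * c := by
  have hsum : ∑ X : Finset α, bernoulliWeight p X * #(f X) ≤
      ∑ X : Finset α, bernoulliWeight p X * (Fintype.card β * c) := by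
    rw [← sum_mul, sum_bernoulliWeight (α := α), one_mul, sum_bernoulliWeight_mul_card]
    simpa using sum_le_sum fun b (_ : b ∈ univ) ↦ h b
  obtain ⟨X, -, hX⟩ := exists_le_of_sum_le univ_nonempty hsum
  exact ⟨X, le_of_mul_le_mul_left hX (bernoulliWeight_pos hp₀ hp₁ X)⟩

end BernoulliWeight

lemma one_sub_log_div_pow_le_inv {d : ℕ} (hd : 0 < d) :
    (1 - Real.log d / d) ^ d ≤ (d : ℝ)⁻¹ := by
  have hd' : (0 : ℝ) < d := Nat.cast_pos.2 hd
  calc (1 - Real.log d / d) ^ d ≤ Real.exp (-Real.log d) :=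
        Real.one_sub_div_pow_le_exp_neg ((Real.log_le_sub_one_of_pos hd').trans (by linarith))
    _ = (d : ℝ)⁻¹ := by rw [Real.exp_neg, Real.exp_log hd']

section TwoStepRestrained

variable {G : SimpleGraph (Fin n)}

lemma mem_N2 {i j : Fin n} : j ∈ N2 G i ↔ G.dist i j = 2 := by
  simp [N2]

lemma mem_N2_comm {i j : Fin n} : j ∈ N2 G i ↔ i ∈ N2 G j := by
  simp [mem_N2, SimpleGraph.dist_comm]

lemma notMem_N2_self (i : Fin n) : i ∉ N2 G i := by
  simp [mem_N2]

lemma minHopDeg_le_hopDeg (G : SimpleGraph (Fin n)) (i : Fin n) : minHopDeg G ≤ hopDeg G i :=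
  ciInf_le (OrderBot.bddBelow _) i

lemma mem_ZSet {X : Finset (Fin n)} {i : Fin n} :
    i ∈ ZSet G X ↔ i ∉ X ∧ Disjoint (N2 G i) X := by
  simp [ZSet, disjoint_iff_inter_eq_empty]

lemma mem_ZSet_iff_disjoint_insert {X : Finset (Fin n)} {i : Fin n} :
    i ∈ ZSet G X ↔ Disjoint X (insert i (N2 G i)) := by
  rw [mem_ZSet, disjoint_insert_right, disjoint_comm]

def hopYSet (G : SimpleGraph (Fin n)) (X : Finset (Fin n)) : Finset (Fin n) :=
  {i | i ∉ X ∪ ZSet G X ∧ N2 G i ⊆ X ∪ ZSet G X}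

def hopDSet (G : SimpleGraph (Fin n)) (X : Finset (Fin n)) : Finset (Fin n) :=
  X ∪ ZSet G X ∪ hopYSet G X

lemma mem_hopYSet {X : Finset (Fin n)} {i : Fin n} :
    i ∈ hopYSet G X ↔ i ∉ X ∪ ZSet G X ∧ N2 G i ⊆ X ∪ ZSet G X := by
  simp [hopYSet]

lemma isTwoStepRestrainedDomSet_hopDSet (G : SimpleGraph (Fin n)) (X : Finset (Fin n)) :
    IsTwoStepRestrainedDomSet G (hopDSet G X) := by
  refine ⟨fun u hu ↦ ?_, fun u hu ↦ ?_⟩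
  · simp only [hopDSet, mem_union, not_or] at hu
    obtain ⟨⟨huX, huZ⟩, -⟩ := hu
    obtain ⟨v, hvN, hvX⟩ := not_disjoint_iff.1 fun h ↦ huZ (mem_ZSet.2 ⟨huX, h⟩)
    exact ⟨v, mem_union_left _ (mem_union_left _ hvX), mem_N2.1 hvN⟩
  · simp only [hopDSet, mem_union (s := X ∪ ZSet G X), not_or] at hu
    obtain ⟨huXZ, huY⟩ := hu
    obtain ⟨v, hvN, hvXZ⟩ := not_subset.1 fun h ↦ huY (mem_hopYSet.2 ⟨huXZ, h⟩)
    refine ⟨v, ?_, mem_N2.1 hvN⟩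
    simp only [hopDSet, mem_union (s := X ∪ ZSet G X), not_or]
    exact ⟨hvXZ, fun hvY ↦ huXZ ((mem_hopYSet.1 hvY).2 (mem_N2_comm.1 hvN))⟩

lemma mem_or_mem_of_mem_hopDSet {X : Finset (Fin n)} {i j : Fin n} (hi : i ∈ hopDSet G X)
    (hj : j ∈ N2 G i) : i ∈ X ∪ ZSet G X ∨ j ∈ X ∪ ZSet G X := by
  rcases mem_union.1 hi with hi | hi
  · exact Or.inl hi
  · exact Or.inr ((mem_hopYSet.1 hi).2 hj)

lemma eventProb_mem_ZSet (p : ℝ) (i : Fin n) :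
    eventProb p (i ∈ ZSet G ·) = (1 - p) ^ (hopDeg G i + 1) := by
  simp_rw [mem_ZSet_iff_disjoint_insert]
  rw [eventProb_disjoint, card_insert_of_notMem (notMem_N2_self i), hopDeg]

lemma eventProb_mem_union_ZSet_le {p : ℝ} (hp₀ : 0 ≤ p) (hp₁ : p ≤ 1) {δ : ℕ} {i : Fin n}
    (hδ : δ ≤ hopDeg G i) : eventProb p (fun X ↦ i ∈ X ∪ ZSet G X) ≤ p + (1 - p) ^ (δ + 1) := by
  simp_rw [mem_union]
  calc eventProb p (fun X ↦ i ∈ X ∨ i ∈ ZSet G X)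
      ≤ eventProb p (i ∈ ·) + eventProb p (i ∈ ZSet G ·) := eventProb_or_le hp₀ hp₁ _ _
    _ ≤ p + (1 - p) ^ (δ + 1) := by
      rw [eventProb_mem, eventProb_mem_ZSet]
      have := pow_le_pow_of_le_one (sub_nonneg.2 hp₁) (by linarith) (Nat.add_le_add_right hδ 1)
      linarith

lemma eventProb_mem_hopDSet_le {p : ℝ} (hp₀ : 0 ≤ p) (hp₁ : p ≤ 1) {δ : ℕ} (hδ₀ : 0 < δ)
    (hδ : ∀ i, δ ≤ hopDeg G i) (i : Fin n) :
    eventProb p (i ∈ hopDSet G ·) ≤ 2 * (p + (1 - p) ^ (δ + 1)) := by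
  obtain ⟨j, hj⟩ : (N2 G i).Nonempty := card_pos.1 (hδ₀.trans_le (hδ i))
  calc eventProb p (i ∈ hopDSet G ·)
      ≤ eventProb p (fun X ↦ i ∈ X ∪ ZSet G X ∨ j ∈ X ∪ ZSet G X) :=
        eventProb_mono hp₀ hp₁ fun X hi ↦ mem_or_mem_of_mem_hopDSet hi hj
    _ ≤ eventProb p (fun X ↦ i ∈ X ∪ ZSet G X) + eventProb p (fun X ↦ j ∈ X ∪ ZSet G X) :=
        eventProb_or_le hp₀ hp₁ _ _
    _ ≤ 2 * (p + (1 - p) ^ (δ + 1)) := by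
      linarith [eventProb_mem_union_ZSet_le hp₀ hp₁ (hδ i),
        eventProb_mem_union_ZSet_le hp₀ hp₁ (hδ j)]

lemma exists_card_hopDSet_le {p : ℝ} (hp₀ : 0 < p) (hp₁ : p < 1) {δ : ℕ} (hδ₀ : 0 < δ)
    (hδ : ∀ i, δ ≤ hopDeg G i) :
    ∃ X, (#(hopDSet G X) : ℝ) ≤ n * (2 * (p + (1 - p) ^ (δ + 1))) := by
  simpa using exists_card_le_of_eventProb_le hp₀ hp₁ (hopDSet G)
    (eventProb_mem_hopDSet_le hp₀.le hp₁.le hδ₀ hδ)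

lemma tsrDomNum_le_card {S : Finset (Fin n)} (hS : IsTwoStepRestrainedDomSet G S) :
    tsrDomNum G ≤ #S :=
  Nat.sInf_le ⟨S, hS, rfl⟩

end TwoStepRestrained

theorem stmt17 {n : ℕ} (G : SimpleGraph (Fin n)) (hδh : 1 ≤ minHopDeg G) :
    (tsrDomNum G : ℝ) ≤
      2 * n * (Real.log (minHopDeg G + 1) + 1) / (minHopDeg G + 1) := by
  set δ := minHopDeg G
  set d : ℕ := δ + 1 with hd
  have hd₁ : (1 : ℝ) < d := by rw [hd]; exact_mod_cast Nat.lt_succ_of_le hδh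
  set p : ℝ := Real.log d / d
  have hp₀ : 0 < p := div_pos (Real.log_pos hd₁) (by linarith)
  have hp₁ : p < 1 :=
    (div_lt_one (by linarith)).2 ((Real.log_le_sub_one_of_pos (by linarith)).trans_lt (by linarith))
  obtain ⟨X, hX⟩ := exists_card_hopDSet_le hp₀ hp₁ hδh (minHopDeg_le_hopDeg G)
  calc (tsrDomNum G : ℝ) ≤ #(hopDSet G X) := by
        exact_mod_cast tsrDomNum_le_card (isTwoStepRestrainedDomSet_hopDSet G X)
    _ ≤ n * (2 * (p + (1 - p) ^ d)) := hX
    _ ≤ n * (2 * (p + (d : ℝ)⁻¹)) := by gcongr; exact one_sub_log_div_pow_le_inv (Nat.succ_pos δ)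
    _ = 2 * n * (Real.log (δ + 1) + 1) / (δ + 1) := by
        simp only [p, hd]
        push_cast
        field_simp
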